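/- Let X be a real Banach space and D ⊆ X a bounded, closed, convex set containing at least two points. Then a point c ∈ X is a center of D if and only if c is a center of D^c; that is, D and D^c have the same set of centers. -/

import Mathlib

/-!
If `D ⊆ B(x, r)` with `r ≤ δ(D)` and `p ≠ x`, moving the center from `x` a distance `δ(D) - r`
away from `p` gives a ball of radius `δ(D)` that still contains `D`, hence contains `D^c`;
measuring `p` against it yields `‖p - x‖ ≤ r`. So `r(D^c, x) = r(D, x)` whenever
`r(D, x) ≤ δ(D)`, which covers every point competing for the radius, and the two sets have the
same radius and the same centers.
-/

open Metric Set Bornology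

variable {X : Type*}

/-- `frad A x` is r(A,x) = sup of distances from x to points of A. -/
noncomputable def frad [NormedAddCommGroup X] (A : Set X) (x : X) : ℝ :=
  sSup ((fun a => dist x a) '' A)

/-- `rad A` is the (Chebyshev) radius r(A) = inf over x in the space of r(A,x). -/
noncomputable def rad [NormedAddCommGroup X] (A : Set X) : ℝ :=
  sInf (Set.range fun x => frad A x)

/-- `selfRad A` is the self-radius r(A,A) = inf over x ∈ A of r(A,x). -/
noncomputable def selfRad [NormedAddCommGroup X] (A : Set X) : ℝ :=
  sInf ((fun x => frad A x) '' A)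

/-- The ball intersection D' of D. -/
noncomputable def ballInt [NormedAddCommGroup X] (D : Set X) : Set X :=
  ⋂ x ∈ D, closedBall x (Metric.diam D)

/-- The ball hull D^c of D. -/
noncomputable def ballHull [NormedAddCommGroup X] (D : Set X) : Set X :=
  ⋂ x ∈ {y : X | D ⊆ closedBall y (Metric.diam D)}, closedBall x (Metric.diam D)

/-- A set is diametrically maximal (complete) if adjoining any outside point
increases the diameter. -/
def IsDM [NormedAddCommGroup X] (C : Set X) : Prop :=
  ∀ x ∉ C, Metric.diam C < Metric.diam (insert x C)

/-- `C` is a completion of `D`: a diametrically maximal set containing `D`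
with the same diameter. -/
def IsCompletion [NormedAddCommGroup X] (D C : Set X) : Prop :=
  IsDM C ∧ D ⊆ C ∧ Metric.diam C = Metric.diam D

section Radius

variable [NormedAddCommGroup X] {A B : Set X}

lemma bddAbove_dist_image (hA : IsBounded A) (x : X) :
    BddAbove ((fun a => dist x a) '' A) := by
  obtain ⟨R, hR⟩ := hA.subset_closedBall x
  exact ⟨R, by rintro _ ⟨a, ha, rfl⟩; simpa [dist_comm] using hR ha⟩

lemma dist_le_frad (hA : IsBounded A) {x a : X} (ha : a ∈ A) : dist x a ≤ frad A x :=
  le_csSup (bddAbove_dist_image hA x) ⟨a, ha, rfl⟩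

lemma frad_le (hA : A.Nonempty) {x : X} {r : ℝ} (h : ∀ a ∈ A, dist x a ≤ r) :
    frad A x ≤ r :=
  csSup_le (hA.image _) (by rintro _ ⟨a, ha, rfl⟩; exact h a ha)

lemma frad_mono (hB : IsBounded B) (hA : A.Nonempty) (hAB : A ⊆ B) (x : X) :
    frad A x ≤ frad B x :=
  csSup_le_csSup (bddAbove_dist_image hB x) (hA.image _) (image_mono hAB)

lemma subset_closedBall_frad (hA : IsBounded A) (x : X) : A ⊆ closedBall x (frad A x) :=
  fun _ ha => mem_closedBall'.2 (dist_le_frad hA ha)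

lemma frad_le_diam (hA : IsBounded A) {a : X} (ha : a ∈ A) : frad A a ≤ diam A :=
  frad_le ⟨a, ha⟩ fun _ hb => dist_le_diam_of_mem hA ha hb

lemma rad_le_frad (hA : IsBounded A) (hA' : A.Nonempty) (x : X) : rad A ≤ frad A x := by
  obtain ⟨a, ha⟩ := hA'
  refine csInf_le ⟨0, ?_⟩ ⟨x, rfl⟩
  rintro _ ⟨y, rfl⟩
  exact dist_nonneg.trans (dist_le_frad hA ha)

lemma le_rad {r : ℝ} (h : ∀ x, r ≤ frad A x) : r ≤ rad A :=
  le_csInf (range_nonempty _) (by rintro _ ⟨x, rfl⟩; exact h x)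

end Radius

section BallHull

variable [NormedAddCommGroup X] {D : Set X}

lemma mem_ballHull {p : X} :
    p ∈ ballHull D ↔ ∀ y, D ⊆ closedBall y (diam D) → dist p y ≤ diam D := by
  simp [ballHull]

lemma subset_ballHull (D : Set X) : D ⊆ ballHull D :=
  fun _ hp => mem_ballHull.2 fun _ hy => hy hp

variable [NormedSpace ℝ X]

lemma ballHull_subset_closedBall (hD : D.Nonempty) {x : X} {r : ℝ} (hr : r ≤ diam D)
    (hDx : D ⊆ closedBall x r) : ballHull D ⊆ closedBall x r := by
  intro p hp
  rw [mem_closedBall, dist_eq_norm]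
  rcases eq_or_ne p x with rfl | hpx
  · obtain ⟨a, ha⟩ := hD
    simpa using dist_nonneg.trans (mem_closedBall.1 (hDx ha))
  have hnorm : 0 < ‖p - x‖ := norm_pos_iff.2 (sub_ne_zero.2 hpx)
  set t := (diam D - r) / ‖p - x‖
  have ht : 0 ≤ t := div_nonneg (by linarith) hnorm.le
  have hshift : t * ‖p - x‖ = diam D - r := div_mul_cancel₀ _ hnorm.ne'
  set y := x - t • (p - x)
  have hDy : D ⊆ closedBall y (diam D) := by
    intro a ha
    have hxy : dist x y = diam D - r := by
      rw [dist_eq_norm, show x - y = t • (p - x) by simp [y], norm_smul,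
        Real.norm_of_nonneg ht, hshift]
    calc dist a y ≤ dist a x + dist x y := dist_triangle _ _ _
      _ ≤ r + (diam D - r) := add_le_add (mem_closedBall.1 (hDx ha)) hxy.le
      _ = diam D := by ring
  have hpy : dist p y = ‖p - x‖ + (diam D - r) := by
    rw [dist_eq_norm, show p - y = (1 + t) • (p - x) by simp only [y]; module, norm_smul,
      Real.norm_of_nonneg (by linarith), add_mul, one_mul, hshift]
  linarith [mem_ballHull.1 hp y hDy]

variable (hD : IsBounded D) (hD' : D.Nonempty)
include hD hD'

lemma isBounded_ballHull : IsBounded (ballHull D) := by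
  obtain ⟨a, ha⟩ := hD'
  exact isBounded_closedBall.subset <| ballHull_subset_closedBall ⟨a, ha⟩ le_rfl
    fun _ hb => mem_closedBall.2 (dist_le_diam_of_mem hD hb ha)

lemma frad_ballHull {x : X} (hx : frad D x ≤ diam D) : frad (ballHull D) x = frad D x := by
  refine le_antisymm ?_ (frad_mono (isBounded_ballHull hD hD') hD' (subset_ballHull D) x)
  refine frad_le (hD'.mono (subset_ballHull D)) fun p hp => ?_
  rw [dist_comm]
  exact ballHull_subset_closedBall hD' hx (subset_closedBall_frad hD x) hp

lemma rad_ballHull : rad (ballHull D) = rad D := by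
  have hHb := isBounded_ballHull hD hD'
  have hHne := hD'.mono (subset_ballHull D)
  refine le_antisymm (le_rad fun x => ?_) (le_rad fun x =>
    (rad_le_frad hD hD' x).trans (frad_mono hHb hD' (subset_ballHull D) x))
  obtain ⟨a, ha⟩ := hD'
  rcases le_or_gt (frad D x) (diam D) with hx | hx
  · exact (rad_le_frad hHb hHne x).trans (frad_ballHull hD ⟨a, ha⟩ hx).le
  · calc rad (ballHull D) ≤ frad (ballHull D) a := rad_le_frad hHb hHne a
      _ = frad D a := frad_ballHull hD ⟨a, ha⟩ (frad_le_diam hD ha)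
      _ ≤ diam D := frad_le_diam hD ha
      _ ≤ frad D x := hx.le

end BallHull

theorem stmt15_general [NormedAddCommGroup X] [NormedSpace ℝ X]
    (D : Set X) (hDb : IsBounded D)
    (hDnt : D.Nontrivial) :
    ∀ c : X, frad D c = rad D ↔ frad (ballHull D) c = rad (ballHull D) := by
  obtain ⟨a, ha⟩ := hDnt.nonempty
  have hD : D.Nonempty := ⟨a, ha⟩
  intro c
  rw [rad_ballHull hDb hD]
  constructor
  · intro hc
    have hc_le : frad D c ≤ diam D :=
      hc.le.trans ((rad_le_frad hDb hD a).trans (frad_le_diam hDb ha))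
    rw [frad_ballHull hDb hD hc_le, hc]
  · intro hc
    refine le_antisymm ?_ (rad_le_frad hDb hD c)
    exact hc ▸ frad_mono (isBounded_ballHull hDb hD) hD (subset_ballHull D) c

/-- D and D^c have the same centers. -/
theorem stmt15 [NormedAddCommGroup X] [NormedSpace ℝ X] [CompleteSpace X]
    (D : Set X) (hDb : IsBounded D) (hDcl : IsClosed D) (hDcv : Convex ℝ D)
    (hDnt : D.Nontrivial) :
    ∀ c : X, frad D c = rad D ↔ frad (ballHull D) c = rad (ballHull D) :=
  stmt15_general D hDb hDnt
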